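/- (Combined residual bound, Lemma 3.5.) Let (x^{k+1}, ỹ^{k+1}, y^{k+1}) be produced by one SPIDA iteration from (x^k, y^k), where ∇ψ and ∇φ are Lipschitz continuous with moduli L_ψ and L_φ respectively. Then there exist ξ^{k+1} ∈ ∂f(x^{k+1}) and ζ^{k+1} ∈ ∂g(y^{k+1}) such that ‖x^{k+1} − Π_X[x^{k+1} − (ξ^{k+1} + Aᵀy^{k+1})]‖² + ‖y^{k+1} − Π_Y[y^{k+1} − (ζ^{k+1} − Ax^{k+1})]‖² ≤ 2(‖AAᵀ‖ + γ² L_φ²) ‖ỹ^{k+1} − y^{k+1}‖² + 2μ² L_ψ² ‖x^{k+1} − x^k‖² + 2γ² L_φ² ‖ỹ^{k+1} − y^k‖², where Π_X, Π_Y are Euclidean projections and ‖AAᵀ‖ is the spectral norm of AAᵀ. -/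

import Mathlib

noncomputable section
open scoped RealInnerProductSpace
open Filter

abbrev Euc (d : ℕ) : Type := EuclideanSpace ℝ (Fin d)

/-- Bregman distance associated with kernel `φ` whose gradient map is `φ'`. -/
def Breg {d : ℕ} (φ : Euc d → ℝ) (φ' : Euc d → Euc d) (x y : Euc d) : ℝ :=
  φ x - φ y - ⟪φ' y, x - y⟫

/-- Convex subdifferential. -/
def subdiff {d : ℕ} (h : Euc d → ℝ) (x : Euc d) : Set (Euc d) :=
  {ξ | ∀ z, h x + ⟪z - x, ξ⟫ ≤ h z}

open Classical in
/-- Euclidean (metric) projection onto a set (the nearest point, when it exists). -/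
def projOn {d : ℕ} (X : Set (Euc d)) (z : Euc d) : Euc d :=
  if h : ∃ p ∈ X, ∀ w ∈ X, ‖z - p‖ ≤ ‖z - w‖ then h.choose else z

/-!
At `x^{k+1}` the `x`-step minimises `f` plus a differentiable term with gradient
`q = Aᵀỹ^{k+1} + μ (∇ψ(x^{k+1}) - ∇ψ(x^k))`. Linearising the smooth part along segments and
separating the strict epigraph of the resulting convex function from `X × (-∞, f(x^{k+1})]`
yields `ξ ∈ ∂f(x^{k+1})` with `-(ξ + q)` in the normal cone of `X` at `x^{k+1}`, so
`x^{k+1} = Π_X[x^{k+1} - (ξ + q)]`. Nonexpansiveness of `Π_X` then bounds the residual for the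
direction `ξ + Aᵀy^{k+1}` by `‖Aᵀ(y^{k+1} - ỹ^{k+1})‖ + μ L_ψ ‖x^{k+1} - x^k‖`, and
`‖Aᵀw‖² ≤ ‖AAᵀ‖ ‖w‖²`. The `y`-step gives `ζ ∈ ∂g(y^{k+1})` in the same way, with residual at
most `γ L_φ ‖y^{k+1} - y^k‖ ≤ γ L_φ (‖ỹ^{k+1} - y^{k+1}‖ + ‖ỹ^{k+1} - y^k‖)`; squaring with
`(a + b)² ≤ 2a² + 2b²` gives the bound.
-/

open Set
open ContinuousLinearMap (adjoint adjoint_inner_left)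

section Projection

variable {d : ℕ} {X : Set (Euc d)}

theorem projOn_mem_and_inner_le (hcl : IsClosed X) (hcv : Convex ℝ X) (hne : X.Nonempty)
    (z : Euc d) : projOn X z ∈ X ∧ ∀ w ∈ X, ⟪z - projOn X z, w - projOn X z⟫ ≤ 0 := by
  have : Nonempty X := hne.to_subtype
  have hbdd : BddBelow (range fun w : X => ‖z - w‖) :=
    ⟨0, forall_mem_range.2 fun _ => norm_nonneg _⟩
  obtain ⟨v, hv, hveq⟩ := exists_norm_eq_iInf_of_complete_convex hne hcl.isComplete hcv z
  have hnear : ∃ p ∈ X, ∀ w ∈ X, ‖z - p‖ ≤ ‖z - w‖ :=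
    ⟨v, hv, fun w hw => hveq ▸ ciInf_le hbdd ⟨w, hw⟩⟩
  obtain ⟨hp, hpmin⟩ := hnear.choose_spec
  rw [projOn, dif_pos hnear]
  refine ⟨hp, (norm_eq_iInf_iff_real_inner_le_zero hcv hp).1 ?_⟩
  exact le_antisymm (le_ciInf fun w => hpmin w w.2) (ciInf_le hbdd ⟨_, hp⟩)

theorem norm_sub_projOn_sub_le (hcl : IsClosed X) (hcv : Convex ℝ X) {x v : Euc d} (hx : x ∈ X)
    (hv : ∀ z ∈ X, 0 ≤ ⟪v, z - x⟫) (w : Euc d) : ‖x - projOn X (x - w)‖ ≤ ‖w - v‖ := by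
  obtain ⟨hp, hvi⟩ := projOn_mem_and_inner_le hcl hcv ⟨x, hx⟩ (x - w)
  set p := projOn X (x - w)
  have h₁ : ⟪x - w - p, x - p⟫ ≤ 0 := hvi x hx
  have h₂ : 0 ≤ ⟪v, p - x⟫ := hv p hp
  have hsq : ‖x - p‖ ^ 2 ≤ ⟪w - v, x - p⟫ := by
    rw [show p - x = -(x - p) by abel, inner_neg_right] at h₂
    rw [show x - w - p = (x - p) - w by abel, inner_sub_left, real_inner_self_eq_norm_sq] at h₁
    rw [inner_sub_left w]
    linarith
  have := hsq.trans (real_inner_le_norm _ _)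
  nlinarith [norm_nonneg (x - p), norm_nonneg (w - v)]

end Projection

theorem ConvexOn.isMinOn_add_fderiv {E : Type*} [NormedAddCommGroup E] [NormedSpace ℝ E]
    {X : Set E} {f h : E → ℝ} {h' : StrongDual ℝ E} {x : E} (hf : ConvexOn ℝ X f) (hx : x ∈ X)
    (hh : HasFDerivAt h h' x) (hmin : IsMinOn (f + h) X x) :
    IsMinOn (fun z => f z + h' z) X x := by
  refine isMinOn_iff.2 fun z hz => ?_
  let φ : ℝ → ℝ := fun t => t * (f z - f x) + h (x + t • (z - x))
  have hφ : HasDerivAt φ ((f z - f x) + h' (z - x)) 0 := by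
    have hline : HasDerivAt (fun t : ℝ => x + t • (z - x)) (z - x) 0 := by
      simpa using ((hasDerivAt_id (0 : ℝ)).smul_const (z - x)).const_add x
    have hh₀ : HasFDerivAt h h' (x + (0 : ℝ) • (z - x)) := by simpa using hh
    exact (hasDerivAt_mul_const (f z - f x)).add (hh₀.comp_hasDerivAt 0 hline)
  have hφmin : IsMinOn φ (Icc 0 1) 0 := by
    intro t ⟨ht₀, ht₁⟩
    have hseg : x + t • (z - x) = (1 - t) • x + t • z := by module
    have hcvx := hf.2 hx hz (sub_nonneg.2 ht₁) ht₀ (sub_add_cancel 1 t)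
    have hle := hmin (hseg ▸ hf.1 hx hz (sub_nonneg.2 ht₁) ht₀ (sub_add_cancel 1 t))
    simp only [mem_ofPred_eq, Pi.add_apply, smul_eq_mul, hseg] at hle hcvx
    simp only [φ, mem_ofPred_eq, zero_mul, zero_smul, add_zero, zero_add, hseg]
    linarith
  have hcone : (1 : ℝ) ∈ posTangentConeAt (Icc 0 1) 0 :=
    mem_posTangentConeAt_of_segment_subset (by simp [segment_eq_Icc])
  have hslope := hφmin.localize.hasFDerivWithinAt_nonneg hφ.hasFDerivAt.hasFDerivWithinAt hcone
  simp only [ContinuousLinearMap.toSpanSingleton_apply, one_smul, map_sub] at hslope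
  linarith

theorem StrongDual.exists_apply_prod_eq {E : Type*} [NormedAddCommGroup E]
    [InnerProductSpace ℝ E] [CompleteSpace E] (L : StrongDual ℝ (E × ℝ)) :
    ∃ (u : E) (a : ℝ), ∀ w r, L (w, r) = ⟪u, w⟫ + r * a := by
  refine ⟨(InnerProductSpace.toDual ℝ E).symm (L.comp (.inl ℝ E ℝ)), L (0, 1), fun w r => ?_⟩
  rw [InnerProductSpace.toDual_symm_apply, ← smul_eq_mul, ← map_smul,
    ContinuousLinearMap.comp_apply, ← map_add]
  simp

theorem IsMinOn.exists_mem_subdiff_forall_inner_nonneg {d : ℕ} {X : Set (Euc d)} {f : Euc d → ℝ}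
    {x : Euc d} (hf : ConvexOn ℝ univ f) (hX : Convex ℝ X) (hx : x ∈ X) (hmin : IsMinOn f X x) :
    ∃ η ∈ subdiff f x, ∀ z ∈ X, 0 ≤ ⟪η, z - x⟫ := by
  have hfc : Continuous f := continuousOn_univ.1 (hf.continuousOn isOpen_univ)
  have hepi : Convex ℝ {p : Euc d × ℝ | f p.1 < p.2} := by
    simpa using hf.convex_strict_epigraph
  have hdisj : Disjoint {p : Euc d × ℝ | f p.1 < p.2} (X ×ˢ Iic (f x)) :=
    disjoint_left.2 fun p hlt ⟨hpX, hple⟩ => (hlt.trans_le hple).not_ge (isMinOn_iff.1 hmin _ hpX)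
  obtain ⟨L, c, hLs, hLt⟩ := geometric_hahn_banach_open hepi
    (isOpen_lt (hfc.comp continuous_fst) continuous_snd) (hX.prod (convex_Iic _)) hdisj
  obtain ⟨u, a, hL⟩ := L.exists_apply_prod_eq
  have hlt (z : Euc d) {r : ℝ} (hr : f z < r) : ⟪u, z⟫ + r * a < c := hL z r ▸ hLs (z, r) hr
  have hge (z : Euc d) (hz : z ∈ X) : c ≤ ⟪u, z⟫ + f x * a :=
    hL z (f x) ▸ hLt (z, f x) ⟨hz, mem_Iic.2 le_rfl⟩
  have ha : a < 0 := by linarith [hlt x (lt_add_one (f x)), hge x hx]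
  have hle (z : Euc d) : ⟪u, z⟫ + f z * a ≤ c := by
    refine le_of_forall_pos_lt_add fun ε hε => ?_
    have := hlt z (r := f z - ε / a) (by linarith [div_neg_of_pos_of_neg hε ha])
    rw [sub_mul, div_mul_cancel₀ _ ha.ne] at this
    linarith
  refine ⟨(-a)⁻¹ • u, fun z => ?_, fun z hz => ?_⟩
  · rw [real_inner_smul_right, real_inner_comm, inner_sub_right, ← le_sub_iff_add_le',
      inv_mul_le_iff₀ (neg_pos.2 ha)]
    linarith [hle z, hge x hx]
  · rw [real_inner_smul_left, inner_sub_right]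
    exact mul_nonneg (inv_nonneg.2 (neg_nonneg.2 ha.le)) (by linarith [hle x, hge z hz])

theorem hasGradientAt_breg {d : ℕ} {φ : Euc d → ℝ} {φ' : Euc d → Euc d} {x : Euc d}
    (hφ : HasGradientAt φ (φ' x) x) (y : Euc d) :
    HasGradientAt (fun z => Breg φ φ' z y) (φ' x - φ' y) x := by
  rw [hasGradientAt_iff_hasFDerivAt] at hφ ⊢
  have := (hφ.sub_const (φ y)).sub ((innerSL ℝ (φ' y)).hasFDerivAt.sub_const ⟪φ' y, y⟫)
  refine (this.congr_fderiv ?_).congr_of_eventuallyEq (.of_eq ?_)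
  · ext v
    simp
  · ext z
    simp [Breg, inner_sub_right]

theorem exists_mem_subdiff_of_isMinOn_add_breg {d : ℕ} {X : Set (Euc d)} {f ψ : Euc d → ℝ}
    {ψ' : Euc d → Euc d} {ℓ x₀ x : Euc d} {μ : ℝ} (hf : ConvexOn ℝ univ f) (hX : Convex ℝ X)
    (hx : x ∈ X) (hψ : HasGradientAt ψ (ψ' x) x)
    (hmin : IsMinOn (fun z => f z + (⟪ℓ, z⟫ + μ * Breg ψ ψ' z x₀)) X x) :
    ∃ ξ ∈ subdiff f x, ∀ z ∈ X, 0 ≤ ⟪ξ + (ℓ + μ • (ψ' x - ψ' x₀)), z - x⟫ := by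
  set q := ℓ + μ • (ψ' x - ψ' x₀)
  have hsmooth : HasGradientAt (fun z => ⟪ℓ, z⟫ + μ * Breg ψ ψ' z x₀) q x := by
    rw [hasGradientAt_iff_hasFDerivAt]
    have hbreg := (hasGradientAt_breg hψ x₀).hasFDerivAt.const_mul μ
    refine ((InnerProductSpace.toDual ℝ _ ℓ).hasFDerivAt.add hbreg).congr_fderiv ?_
    ext v
    simp [q]
  have hlin : IsMinOn (fun z => f z + ⟪q, z⟫) X x :=
    (hf.subset (subset_univ X) hX).isMinOn_add_fderiv hx hsmooth.hasFDerivAt hmin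
  obtain ⟨η, hη, hηX⟩ :=
    hlin.exists_mem_subdiff_forall_inner_nonneg (hf.add ((innerₛₗ ℝ q).convexOn convex_univ)) hX hx
  refine ⟨η - q, fun z => ?_, by simpa using hηX⟩
  have := hη z
  simp only [Pi.add_apply, innerₛₗ_apply_apply, inner_sub_right, inner_sub_left,
    real_inner_comm q] at this ⊢
  linarith

theorem ContinuousLinearMap.norm_adjoint_apply_sq_le {𝕜 E F : Type*} [RCLike 𝕜]
    [NormedAddCommGroup E] [InnerProductSpace 𝕜 E] [CompleteSpace E] [NormedAddCommGroup F]
    [InnerProductSpace 𝕜 F] [CompleteSpace F] (A : E →L[𝕜] F) (w : F) :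
    ‖adjoint A w‖ ^ 2 ≤ ‖A.comp (adjoint A)‖ * ‖w‖ ^ 2 := by
  have hnorm : ‖A.comp (adjoint A)‖ = ‖adjoint A‖ ^ 2 := by
    simpa [sq] using (adjoint A).norm_adjoint_comp_self
  rw [hnorm, ← mul_pow]
  exact pow_le_pow_left₀ (norm_nonneg _) ((adjoint A).le_opNorm w) 2

theorem norm_sub_sq_le_two_mul {E : Type*} [SeminormedAddCommGroup E] (a b : E) :
    ‖a - b‖ ^ 2 ≤ 2 * (‖a‖ ^ 2 + ‖b‖ ^ 2) :=
  (pow_le_pow_left₀ (norm_nonneg _) (norm_sub_le a b) 2).trans add_sq_le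

theorem LipschitzWith.norm_smul_sub_sq_le {E F : Type*} [SeminormedAddCommGroup E]
    [SeminormedAddCommGroup F] [NormedSpace ℝ F] {K : NNReal} {T : E → F}
    (hT : LipschitzWith K T) (c : ℝ) (a b : E) :
    ‖c • (T a - T b)‖ ^ 2 ≤ c ^ 2 * K ^ 2 * ‖a - b‖ ^ 2 := by
  calc ‖c • (T a - T b)‖ ^ 2 = c ^ 2 * ‖T a - T b‖ ^ 2 := by
        rw [norm_smul, Real.norm_eq_abs, mul_pow, sq_abs]
    _ ≤ c ^ 2 * (K * ‖a - b‖) ^ 2 := by gcongr; exact hT.norm_sub_le a b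
    _ = c ^ 2 * K ^ 2 * ‖a - b‖ ^ 2 := by ring

theorem spida_combined_residual_bound_general {n m : ℕ}
    (X : Set (Euc n)) (Y : Set (Euc m))
    (hXcl : IsClosed X) (hXcv : Convex ℝ X)
    (hYcl : IsClosed Y) (hYcv : Convex ℝ Y)
    (f : Euc n → ℝ) (g : Euc m → ℝ)
    (hf : ConvexOn ℝ Set.univ f)
    (hg : ConvexOn ℝ Set.univ g)
    (A : Euc n →L[ℝ] Euc m)
    (γ μ : ℝ)
    (φ : Euc m → ℝ) (φ' : Euc m → Euc m)
    (hφg : ∀ z, HasGradientAt φ (φ' z) z)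
    (ψ : Euc n → ℝ) (ψ' : Euc n → Euc n)
    (hψg : ∀ z, HasGradientAt ψ (ψ' z) z)
    (xk x1 : Euc n) (yk yt1 y1 : Euc m)
    (hx1mem : x1 ∈ X)
    (hx1min : ∀ x ∈ X, f x1 + ⟪A x1, yt1⟫ + μ * Breg ψ ψ' x1 xk ≤
      f x + ⟪A x, yt1⟫ + μ * Breg ψ ψ' x xk)
    (hy1mem : y1 ∈ Y)
    (hy1max : ∀ y ∈ Y, -g y + ⟪A x1, y⟫ - γ * Breg φ φ' y yk ≤
      -g y1 + ⟪A x1, y1⟫ - γ * Breg φ φ' y1 yk)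
    (Lψ Lφ : NNReal) (hψlip : LipschitzWith Lψ ψ') (hφlip : LipschitzWith Lφ φ') :
    ∃ ξ ∈ subdiff f x1, ∃ ζ ∈ subdiff g y1,
      ‖x1 - projOn X (x1 - (ξ + ContinuousLinearMap.adjoint A y1))‖ ^ 2
          + ‖y1 - projOn Y (y1 - (ζ - A x1))‖ ^ 2 ≤
        2 * (‖A.comp (ContinuousLinearMap.adjoint A)‖ + γ ^ 2 * (Lφ : ℝ) ^ 2)
            * ‖yt1 - y1‖ ^ 2
          + 2 * μ ^ 2 * (Lψ : ℝ) ^ 2 * ‖x1 - xk‖ ^ 2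
          + 2 * γ ^ 2 * (Lφ : ℝ) ^ 2 * ‖yt1 - yk‖ ^ 2 := by
  obtain ⟨ξ, hξ, hξX⟩ := exists_mem_subdiff_of_isMinOn_add_breg (ℓ := adjoint A yt1)
    (x₀ := xk) (μ := μ) hf hXcv hx1mem (hψg x1) (isMinOn_iff.2 fun x hx => by
      simp only [adjoint_inner_left, real_inner_comm (A _) yt1]; linarith [hx1min x hx])
  obtain ⟨ζ, hζ, hζY⟩ := exists_mem_subdiff_of_isMinOn_add_breg (ℓ := -A x1)
    (x₀ := yk) (μ := γ) hg hYcv hy1mem (hφg y1) (isMinOn_iff.2 fun y hy => by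
      simp only [inner_neg_left]; linarith [hy1max y hy])
  refine ⟨ξ, hξ, ζ, hζ, ?_⟩
  have hx := norm_sub_projOn_sub_le hXcl hXcv hx1mem hξX (ξ + adjoint A y1)
  have hy := norm_sub_projOn_sub_le hYcl hYcv hy1mem hζY (ζ - A x1)
  rw [show ξ + adjoint A y1 - (ξ + (adjoint A yt1 + μ • (ψ' x1 - ψ' xk)))
      = adjoint A (y1 - yt1) - μ • (ψ' x1 - ψ' xk) by rw [map_sub]; abel] at hx
  rw [show ζ - A x1 - (ζ + (-A x1 + γ • (φ' y1 - φ' yk))) = -(γ • (φ' y1 - φ' yk)) by abel,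
    norm_neg] at hy
  have hyk := norm_sub_sq_le_two_mul (yt1 - yk) (yt1 - y1)
  rw [sub_sub_sub_cancel_left] at hyk
  have hadj := A.norm_adjoint_apply_sq_le (y1 - yt1)
  rw [norm_sub_rev y1 yt1] at hadj
  linarith [pow_le_pow_left₀ (norm_nonneg _) hx 2, pow_le_pow_left₀ (norm_nonneg _) hy 2,
    norm_sub_sq_le_two_mul (adjoint A (y1 - yt1)) (μ • (ψ' x1 - ψ' xk)),
    hψlip.norm_smul_sub_sq_le μ x1 xk, hφlip.norm_smul_sub_sq_le γ y1 yk,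
    mul_le_mul_of_nonneg_left hyk (by positivity : (0 : ℝ) ≤ γ ^ 2 * Lφ ^ 2)]

/-- Lemma 3.5: combined residual bound for one SPIDA iteration. -/
theorem spida_combined_residual_bound {n m : ℕ}
    (X : Set (Euc n)) (Y : Set (Euc m))
    (hXne : X.Nonempty) (hXcl : IsClosed X) (hXcv : Convex ℝ X)
    (hYne : Y.Nonempty) (hYcl : IsClosed Y) (hYcv : Convex ℝ Y)
    (f : Euc n → ℝ) (g : Euc m → ℝ)
    (hf : ConvexOn ℝ Set.univ f) (hflsc : LowerSemicontinuous f)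
    (hg : ConvexOn ℝ Set.univ g) (hglsc : LowerSemicontinuous g)
    (A : Euc n →L[ℝ] Euc m)
    (γ μ : ℝ) (hγ : 0 < γ) (hμ : 0 < μ)
    (φ : Euc m → ℝ) (φ' : Euc m → Euc m)
    (hφg : ∀ z, HasGradientAt φ (φ' z) z) (hφcv : ConvexOn ℝ Set.univ φ)
    (ψ : Euc n → ℝ) (ψ' : Euc n → Euc n)
    (hψg : ∀ z, HasGradientAt ψ (ψ' z) z) (hψcv : ConvexOn ℝ Set.univ ψ)
    (xk x1 : Euc n) (yk yt1 y1 : Euc m)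
    (hxk : xk ∈ X) (hyk : yk ∈ Y)
    (hyt1mem : yt1 ∈ Y)
    (hyt1max : ∀ y ∈ Y, -g y + ⟪A xk, y⟫ - γ * Breg φ φ' y yk ≤
      -g yt1 + ⟪A xk, yt1⟫ - γ * Breg φ φ' yt1 yk)
    (hx1mem : x1 ∈ X)
    (hx1min : ∀ x ∈ X, f x1 + ⟪A x1, yt1⟫ + μ * Breg ψ ψ' x1 xk ≤
      f x + ⟪A x, yt1⟫ + μ * Breg ψ ψ' x xk)
    (hy1mem : y1 ∈ Y)
    (hy1max : ∀ y ∈ Y, -g y + ⟪A x1, y⟫ - γ * Breg φ φ' y yk ≤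
      -g y1 + ⟪A x1, y1⟫ - γ * Breg φ φ' y1 yk)
    (Lψ Lφ : NNReal) (hψlip : LipschitzWith Lψ ψ') (hφlip : LipschitzWith Lφ φ') :
    ∃ ξ ∈ subdiff f x1, ∃ ζ ∈ subdiff g y1,
      ‖x1 - projOn X (x1 - (ξ + ContinuousLinearMap.adjoint A y1))‖ ^ 2
          + ‖y1 - projOn Y (y1 - (ζ - A x1))‖ ^ 2 ≤
        2 * (‖A.comp (ContinuousLinearMap.adjoint A)‖ + γ ^ 2 * (Lφ : ℝ) ^ 2)
            * ‖yt1 - y1‖ ^ 2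
          + 2 * μ ^ 2 * (Lψ : ℝ) ^ 2 * ‖x1 - xk‖ ^ 2
          + 2 * γ ^ 2 * (Lφ : ℝ) ^ 2 * ‖yt1 - yk‖ ^ 2 :=
  spida_combined_residual_bound_general X Y hXcl hXcv hYcl hYcv f g hf hg A γ μ φ φ' hφg ψ ψ' hψg xk
    x1 yk yt1 y1 hx1mem hx1min hy1mem hy1max Lψ Lφ hψlip hφlip
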